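/- Let P ∈ ℝ^{r₁×n₁} and Q ∈ ℝ^{r₂×n₂} be matrices satisfying |‖Pu‖² − ‖u‖²| ≤ ε‖u‖² for all u ∈ ℝ^{n₁} and |‖Qv‖² − ‖v‖²| ≤ ε‖v‖² for all v ∈ ℝ^{n₂}, with ε ≥ 0. Then the Kronecker product P ⊗ Q satisfies |‖(P⊗Q)x‖² − ‖x‖²| ≤ ε(2+ε)‖x‖² for all x ∈ ℝ^{n₁n₂}. -/
import Mathlib


open scoped BigOperators Kronecker

/-- Squared Euclidean norm of a finitely-indexed real vector. -/
noncomputable def esq {ι : Type*} [Fintype ι] (x : ι → ℝ) : ℝ := ∑ i, x i ^ 2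

lemma esq_nonneg {ι : Type*} [Fintype ι] (x : ι → ℝ) : 0 ≤ esq x :=
  Finset.sum_nonneg fun _ _ => sq_nonneg _

lemma sum_abs_bound {ι : Type*} [Fintype ι] (ε : ℝ) (f g : ι → ℝ)
    (h : ∀ i, |f i - g i| ≤ ε * g i) :
    |(∑ i, f i) - ∑ i, g i| ≤ ε * ∑ i, g i := by
  rw [← Finset.sum_sub_distrib, Finset.mul_sum]
  exact (Finset.abs_sum_le_sum_abs _ _).trans (Finset.sum_le_sum fun i _ => h i)

theorem stmt4 {n₁ n₂ r₁ r₂ : ℕ} (P : Matrix (Fin r₁) (Fin n₁) ℝ)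
    (Q : Matrix (Fin r₂) (Fin n₂) ℝ) (ε : ℝ) (hε : 0 ≤ ε)
    (hP : ∀ u : Fin n₁ → ℝ, |esq (P.mulVec u) - esq u| ≤ ε * esq u)
    (hQ : ∀ v : Fin n₂ → ℝ, |esq (Q.mulVec v) - esq v| ≤ ε * esq v) :
    ∀ x : Fin n₁ × Fin n₂ → ℝ,
      |esq ((P ⊗ₖ Q).mulVec x) - esq x| ≤ ε * (2 + ε) * esq x := by
  intro x
  set z : Fin n₁ × Fin r₂ → ℝ := fun p => Q.mulVec (fun l => x (p.1, l)) p.2 with hz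
  -- step 1: |esq z - esq x| ≤ ε * esq x
  have h1 : esq z = ∑ k : Fin n₁, esq (Q.mulVec (fun l => x (k, l))) := by
    simp [esq, Fintype.sum_prod_type, hz]
  have h2 : esq x = ∑ k : Fin n₁, esq (fun l => x (k, l)) := by
    simp [esq, Fintype.sum_prod_type]
  have hzx : |esq z - esq x| ≤ ε * esq x := by
    rw [h1, h2]
    exact sum_abs_bound ε _ _ fun k => hQ _
  -- step 2: entrywise identity
  have hentry : ∀ i j, (P ⊗ₖ Q).mulVec x (i, j) = P.mulVec (fun k => z (k, j)) i := by
    intro i j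
    simp only [Matrix.mulVec, dotProduct, hz]
    rw [Fintype.sum_prod_type]
    refine Finset.sum_congr rfl fun k _ => ?_
    rw [Finset.mul_sum]
    refine Finset.sum_congr rfl fun l _ => ?_
    simp [Matrix.kroneckerMap_apply, mul_assoc]
  have h3 : esq ((P ⊗ₖ Q).mulVec x) = ∑ j : Fin r₂, esq (P.mulVec (fun k => z (k, j))) := by
    simp only [esq, Fintype.sum_prod_type_right]
    refine Finset.sum_congr rfl fun j _ => Finset.sum_congr rfl fun i _ => ?_
    rw [hentry i j]
  have h4 : esq z = ∑ j : Fin r₂, esq (fun k => z (k, j)) := by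
    simp [esq, Fintype.sum_prod_type_right]
  have houtz : |esq ((P ⊗ₖ Q).mulVec x) - esq z| ≤ ε * esq z := by
    rw [h3, h4]
    exact sum_abs_bound ε _ _ fun j => hP _
  -- combine
  have htri := abs_sub_le (esq ((P ⊗ₖ Q).mulVec x)) (esq z) (esq x)
  have hzle : esq z ≤ esq x + ε * esq x := by
    have := (abs_le.mp hzx).2; linarith
  nlinarith [esq_nonneg x, esq_nonneg z]
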